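/- For γ₁, γ₂ > 0, q > -1, υ a positive integer, and real ϖ, assuming γ₁ + υn < γ₁ + γ₂ for convergence (i.e., γ₂ > υn), the Fourier-type integral evaluates as ∫_{-∞}^∞ e^{-iϖx} e^{γ₁x}(1+e^x)^{-(γ₁+γ₂)} M_n(p,q,υ;e^x) dx = (−1)^n B(γ₁−iϖ, γ₂+iϖ)(q+1)_{υn} Σ_{j=0}^n [(−n)_j (n+1−p)_{υj} (γ₁−iϖ)_{υj}] / [j! (q+1)_{υj} (1−γ₂−iϖ)_{υj}]. -/

import Mathlib

open Finset MeasureTheory Real Filter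

/-- Pochhammer symbol `(a)_k = a (a+1) ⋯ (a+k-1)` for a real `a`. -/
noncomputable def poch (a : ℝ) (k : ℕ) : ℝ := ∏ i ∈ Finset.range k, (a + i)

/-- Generalized binomial coefficient `C(a, j)` for real `a`. -/
noncomputable def rchoose (a : ℝ) (j : ℕ) : ℝ := (-1 : ℝ) ^ j * poch (-a) j / j.factorial

/-- The finite orthogonal polynomials `M_n^{(p,q)}(x)`. -/
noncomputable def Mfin (p q : ℝ) (n : ℕ) (x : ℝ) : ℝ :=
  (-1 : ℝ) ^ n * n.factorial *
    ∑ j ∈ Finset.range (n + 1), rchoose (p - n - 1) j * rchoose (q + n) (n - j) * (-x) ^ j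

/-- The first set of finite biorthogonal polynomials `M_n(p,q,υ;x)`. -/
noncomputable def Mbio (p q : ℝ) (υ n : ℕ) (x : ℝ) : ℝ :=
  (-1 : ℝ) ^ n * poch (q + 1) (υ * n) *
    ∑ j ∈ Finset.range (n + 1), (-1 : ℝ) ^ j * (n.choose j : ℝ) *
      (poch (n + 1 - p) (υ * j) / poch (q + 1) (υ * j)) * (-x) ^ (υ * j)

/-- The second set of finite biorthogonal polynomials `𝔐_n(p,q,υ;x)`. -/
noncomputable def Mfrak (p q : ℝ) (υ n : ℕ) (x : ℝ) : ℝ :=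
  ∑ r ∈ Finset.range (n + 1), ∑ s ∈ Finset.range (r + 1),
    (-1 : ℝ) ^ (s + n) * (r.choose s : ℝ) * (poch (p + q - n) r / r.factorial) *
      poch ((s + q + 1) / υ) n * x ^ r * (1 + x) ^ (n - r)

/-- Complex Pochhammer symbol. -/
noncomputable def cpoch (a : ℂ) (k : ℕ) : ℂ := ∏ i ∈ Finset.range k, (a + i)

/-- The polynomials `M_n(p,q,υ;z)` with complex argument. -/
noncomputable def McC (p q : ℝ) (υ n : ℕ) (z : ℂ) : ℂ :=
  (-1 : ℂ) ^ n * cpoch ((q : ℂ) + 1) (υ * n) *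
    ∑ j ∈ Finset.range (n + 1), (-1 : ℂ) ^ j * (n.choose j : ℂ) *
      (cpoch ((n : ℂ) + 1 - (p : ℂ)) (υ * j) / cpoch ((q : ℂ) + 1) (υ * j)) * (-z) ^ (υ * j)

/-- The Beta function `B(a,b) = Γ(a)Γ(b)/Γ(a+b)`. -/
noncomputable def cBeta (a b : ℂ) : ℂ := Complex.Gamma a * Complex.Gamma b / Complex.Gamma (a + b)

/-! ### Auxiliary lemmas -/

lemma cpoch_succ (a : ℂ) (k : ℕ) : cpoch a (k+1) = cpoch a k * (a + k) :=
  Finset.prod_range_succ _ _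

lemma cpoch_ne_zero {a : ℂ} {k : ℕ} (h : ∀ i < k, a + i ≠ 0) : cpoch a k ≠ 0 := by
  rw [cpoch, Finset.prod_ne_zero_iff]
  intro i hi; exact h i (Finset.mem_range.1 hi)

lemma re_pos_ne_zero {s : ℂ} (h : 0 < s.re) : s ≠ 0 := by
  intro h0; rw [h0] at h; simp at h

lemma cpoch_shift (z : ℂ) (m : ℕ) : cpoch (z - m) m = (-1)^m * cpoch (1 - z) m := by
  induction m with
  | zero => simp [cpoch]
  | succ m ih =>
    have h1 : cpoch (z - (m+1:ℕ)) (m+1) = cpoch (z - (m:ℕ)) m * (z - (m+1:ℕ)) := by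
      rw [cpoch, Finset.prod_range_succ']
      congr 1
      · rw [cpoch]; apply Finset.prod_congr rfl; intro i _; push_cast; ring
      · push_cast; ring
    rw [h1, ih, cpoch_succ]
    push_cast; ring

lemma Gamma_add_nat {s : ℂ} (m : ℕ) (h : ∀ i < m, s + i ≠ 0) :
    Complex.Gamma (s + m) = Complex.Gamma s * cpoch s m := by
  induction m with
  | zero => simp [cpoch]
  | succ m ih =>
    have h1 : (s + (m+1:ℕ)) = (s + m) + 1 := by push_cast; ring
    rw [h1, Complex.Gamma_add_one _ (h m (Nat.lt_succ_self m)),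
      ih (fun i hi => h i (hi.trans (Nat.lt_succ_self m))), cpoch_succ]
    ring

lemma cpoch_neg_nat (n : ℕ) : ∀ j ≤ n, cpoch (-(n:ℂ)) j = (-1)^j * j.factorial * n.choose j := by
  intro j
  induction j with
  | zero => intro _; simp [cpoch]
  | succ j ih =>
    intro h
    have hj : j ≤ n := Nat.le_of_succ_le h
    rw [cpoch_succ, ih hj]
    have key := Nat.choose_succ_right_eq n j
    have key' : ((n.choose (j+1)) : ℂ) * (j+1) = (n.choose j) * ((n - j : ℕ) : ℂ) := by
      exact_mod_cast congrArg (Nat.cast : ℕ → ℂ) key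
    have hnj : ((n - j : ℕ) : ℂ) = (n : ℂ) - j := by
      rw [Nat.cast_sub hj]
    rw [hnj] at key'
    push_cast [Nat.factorial_succ]
    linear_combination ((-1:ℂ))^j * (j.factorial : ℂ) * key'

/-! ### The substitution `u = eˣ/(1+eˣ)` -/

noncomputable def phiF (t : ℝ) : ℝ := Real.log t - Real.log (1 - t)

lemma phiF_hasDeriv : ∀ t ∈ Set.Ioo (0:ℝ) 1,
    HasDerivWithinAt phiF (1/(t*(1-t))) (Set.Ioo (0:ℝ) 1) t := by
  intro t ht
  obtain ⟨ht0, ht1⟩ := ht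
  have h1t : (0:ℝ) < 1 - t := by linarith
  have hd1 : HasDerivAt Real.log t⁻¹ t := Real.hasDerivAt_log ht0.ne'
  have hinner : HasDerivAt (fun s : ℝ => 1 - s) (-1) t := by
    exact (hasDerivAt_id t).const_sub (1:ℝ)
  have hd2 : HasDerivAt (fun s : ℝ => Real.log (1 - s)) ((1-t)⁻¹ * (-1)) t :=
    (Real.hasDerivAt_log h1t.ne').comp t hinner
  have hd : HasDerivAt phiF (t⁻¹ - (1-t)⁻¹ * (-1)) t := hd1.sub hd2
  have heq : t⁻¹ - (1-t)⁻¹ * (-1) = 1/(t*(1-t)) := by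
    field_simp
    ring
  rw [heq] at hd
  exact hd.hasDerivWithinAt

lemma phiF_injOn : Set.InjOn phiF (Set.Ioo (0:ℝ) 1) := by
  intro x hx y hy hxy
  obtain ⟨hx0, hx1⟩ := hx
  obtain ⟨hy0, hy1⟩ := hy
  have h1x : (0:ℝ) < 1 - x := by linarith
  have h1y : (0:ℝ) < 1 - y := by linarith
  have hexp : x / (1 - x) = y / (1 - y) := by
    have := congrArg Real.exp hxy
    rwa [phiF, phiF, Real.exp_sub, Real.exp_sub, Real.exp_log hx0, Real.exp_log h1x,
      Real.exp_log hy0, Real.exp_log h1y] at this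
  rw [div_eq_div_iff h1x.ne' h1y.ne'] at hexp
  nlinarith

lemma phiF_image : phiF '' (Set.Ioo (0:ℝ) 1) = Set.univ := by
  apply Set.eq_univ_of_forall
  intro x
  have hex : (0:ℝ) < Real.exp x := Real.exp_pos x
  have hd : (0:ℝ) < 1 + Real.exp x := by linarith
  refine ⟨Real.exp x / (1 + Real.exp x), ⟨div_pos hex hd, (div_lt_one hd).2 (by linarith)⟩, ?_⟩
  have h1 : 1 - Real.exp x / (1 + Real.exp x) = 1 / (1 + Real.exp x) := by
    field_simp
    ring
  rw [phiF, h1, Real.log_div hex.ne' hd.ne', Real.log_exp, one_div, Real.log_inv]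
  ring

lemma integrand_subst (a b : ℂ) {t : ℝ} (ht : t ∈ Set.Ioo (0:ℝ) 1) :
    |1/(t*(1-t))| • (Complex.exp (a * (phiF t : ℂ)) *
      (1 + Complex.exp ((phiF t : ℂ))) ^ (-(a+b)))
    = (t:ℂ) ^ (a-1) * ((1-t : ℝ):ℂ) ^ (b-1) := by
  obtain ⟨ht0, ht1⟩ := ht
  have h1t : (0:ℝ) < 1 - t := by linarith
  have hr : (0:ℝ) < t / (1 - t) := div_pos ht0 h1t
  have hphi : phiF t = Real.log (t / (1 - t)) := by
    rw [Real.log_div ht0.ne' h1t.ne', phiF]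
  have hexp : Complex.exp ((phiF t : ℂ)) = ((t / (1 - t) : ℝ) : ℂ) := by
    rw [← Complex.ofReal_exp, hphi, Real.exp_log hr]
  have hcexp : Complex.exp (a * (phiF t : ℂ)) = ((t / (1 - t) : ℝ) : ℂ) ^ a := by
    rw [Complex.cpow_def_of_ne_zero (by exact_mod_cast hr.ne'), ← Complex.ofReal_log hr.le,
      hphi, mul_comm]
  have h1plus : (1 : ℂ) + Complex.exp ((phiF t : ℂ)) = (((1 - t)⁻¹ : ℝ) : ℂ) := by
    have h1c : (1:ℂ) - (t:ℂ) ≠ 0 := by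
      intro h; apply h1t.ne'
      have := congrArg Complex.re h; simpa using this
    rw [hexp]
    push_cast
    field_simp
    ring
  rw [hcexp, h1plus]
  have habs : |1/(t*(1-t))| = 1/(t*(1-t)) := abs_of_pos (by positivity)
  rw [habs]
  have hdiv : ((t / (1 - t) : ℝ) : ℂ) ^ a = (t:ℂ)^a * (((1-t:ℝ):ℂ))^(-a) := by
    rw [div_eq_mul_inv, Complex.ofReal_mul, Complex.mul_cpow_ofReal_nonneg ht0.le (by positivity),
      Complex.ofReal_inv, Complex.inv_cpow _ _ ?_, ← Complex.cpow_neg]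
    rw [Complex.arg_ofReal_of_nonneg h1t.le]
    exact Real.pi_ne_zero.symm
  have hinv : (((1 - t)⁻¹ : ℝ) : ℂ) ^ (-(a+b)) = (((1-t:ℝ)):ℂ) ^ (a+b) := by
    rw [Complex.ofReal_inv, Complex.inv_cpow _ _ ?_, ← Complex.cpow_neg, neg_neg]
    rw [Complex.arg_ofReal_of_nonneg h1t.le]
    exact Real.pi_ne_zero.symm
  rw [hdiv, hinv]
  have ht0' : (t:ℂ) ≠ 0 := by exact_mod_cast ht0.ne'
  have h1t' : ((1-t:ℝ):ℂ) ≠ 0 := by exact_mod_cast h1t.ne'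
  have e1 : (t:ℂ)^(a-1) = (t:ℂ)^a / (t:ℂ)^(1:ℂ) := Complex.cpow_sub _ _ ht0'
  have e2 : ((1-t:ℝ):ℂ)^(b-1) = ((1-t:ℝ):ℂ)^(-a) * ((1-t:ℝ):ℂ)^(a+b) / ((1-t:ℝ):ℂ)^(1:ℂ) := by
    rw [← Complex.cpow_add _ _ h1t', ← Complex.cpow_sub _ _ h1t']
    ring_nf
  rw [e1, e2, Complex.cpow_one, Complex.cpow_one]
  rw [Complex.real_smul]
  push_cast
  field_simp

lemma key_integral (a b : ℂ) :
    ∫ x : ℝ, Complex.exp (a * x) * (1 + Complex.exp (x:ℂ)) ^ (-(a+b))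
      = Complex.betaIntegral a b := by
  have := MeasureTheory.integral_image_eq_integral_abs_deriv_smul measurableSet_Ioo
    phiF_hasDeriv phiF_injOn
    (fun x : ℝ => Complex.exp (a * x) * (1 + Complex.exp (x:ℂ)) ^ (-(a+b)))
  rw [phiF_image] at this
  rw [← MeasureTheory.setIntegral_univ, this]
  rw [MeasureTheory.setIntegral_congr_fun measurableSet_Ioo
    (g := fun t : ℝ => (t:ℂ) ^ (a-1) * ((1-t : ℝ):ℂ) ^ (b-1))
    (fun t ht => integrand_subst a b ht)]
  rw [Complex.betaIntegral, intervalIntegral.integral_of_le zero_le_one,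
    MeasureTheory.integral_Ioc_eq_integral_Ioo]
  apply MeasureTheory.setIntegral_congr_fun measurableSet_Ioo
  intro t _
  push_cast
  rfl

lemma key_integrable (a b : ℂ) (ha : 0 < a.re) (hb : 0 < b.re) :
    Integrable (fun x : ℝ => Complex.exp (a * x) * (1 + Complex.exp (x:ℂ)) ^ (-(a+b))) := by
  have h := MeasureTheory.integrableOn_image_iff_integrableOn_abs_deriv_smul measurableSet_Ioo
    phiF_hasDeriv phiF_injOn
    (fun x : ℝ => Complex.exp (a * x) * (1 + Complex.exp (x:ℂ)) ^ (-(a+b)))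
  rw [phiF_image] at h
  rw [← MeasureTheory.integrableOn_univ]
  rw [h]
  have hbeta : IntegrableOn (fun t : ℝ => (t:ℂ) ^ (a-1) * ((1-t : ℝ):ℂ) ^ (b-1))
      (Set.Ioo (0:ℝ) 1) := by
    have := (Complex.betaIntegral_convergent ha hb).1
    apply IntegrableOn.mono_set _ Set.Ioo_subset_Ioc_self
    apply this.congr_fun _ measurableSet_Ioc
    intro t _
    push_cast
    rfl
  exact hbeta.congr_fun (fun t ht => (integrand_subst a b ht).symm) measurableSet_Ioo

/-! ### The Beta-shift identity -/

lemma beta_shift {γ₁ γ₂ : ℝ} (ϖ : ℝ) (hγ₁ : 0 < γ₁) (hγ₂ : 0 < γ₂) (m : ℕ) (hm : (m:ℝ) < γ₂) :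
    Complex.betaIntegral ((γ₁:ℂ) - Complex.I*ϖ + m) ((γ₂:ℂ) + Complex.I*ϖ - m) *
      ((-1:ℂ)^m * cpoch (1 - ((γ₂:ℂ) + Complex.I*ϖ)) m) =
    cBeta ((γ₁:ℂ) - Complex.I*ϖ) ((γ₂:ℂ) + Complex.I*ϖ) *
      cpoch ((γ₁:ℂ) - Complex.I*ϖ) m := by
  set w : ℂ := (γ₁:ℂ) - Complex.I*ϖ with hw
  set z : ℂ := (γ₂:ℂ) + Complex.I*ϖ with hz
  have hwre : w.re = γ₁ := by simp [hw]
  have hzre : z.re = γ₂ := by simp [hz]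
  have h1 : Complex.Gamma (w + m) = Complex.Gamma w * cpoch w m := by
    apply Gamma_add_nat
    intro i _
    apply re_pos_ne_zero
    simp only [Complex.add_re, hwre, Complex.natCast_re]
    positivity
  have h2 : Complex.Gamma z = Complex.Gamma (z - m) * cpoch (z - m) m := by
    have := Gamma_add_nat (s := z - m) m ?_
    · rw [show (z - m) + m = z by ring] at this
      exact this
    · intro i hi
      apply re_pos_ne_zero
      simp only [Complex.add_re, Complex.sub_re, hzre, Complex.natCast_re]
      have : (i:ℝ) ≥ 0 := Nat.cast_nonneg i
      linarith
  have h3 := Complex.Gamma_mul_Gamma_eq_betaIntegral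
    (s := w + m) (t := z - m) ?_ ?_
  · rw [show (w + m) + (z - m) = w + z by ring] at h3
    have hwz : Complex.Gamma (w + z) ≠ 0 := by
      apply Complex.Gamma_ne_zero
      intro k heq
      have hre := congrArg Complex.re heq
      simp only [Complex.add_re, hwre, hzre, Complex.neg_re, Complex.natCast_re] at hre
      nlinarith [Nat.cast_nonneg (α := ℝ) k]
    rw [← cpoch_shift z m, cBeta]
    have hbeta : Complex.betaIntegral (w + m) (z - m) =
        Complex.Gamma (w + m) * Complex.Gamma (z - m) / Complex.Gamma (w + z) := by
      rw [eq_div_iff hwz]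
      linear_combination -h3
    rw [hbeta, h1, h2]
    field_simp
  · simp only [Complex.add_re, hwre, Complex.natCast_re]; positivity
  · simp only [Complex.sub_re, hzre, Complex.natCast_re]; linarith

theorem fourier_transform_Mbio (p q γ₁ γ₂ ϖ : ℝ) (υ n : ℕ) (hγ₁ : 0 < γ₁) (hγ₂ : 0 < γ₂)
    (hq : q > -1) (hυ : 0 < υ) (hconv : ((υ * n : ℕ) : ℝ) < γ₂) :
    ∫ x : ℝ, Complex.exp (-(Complex.I * ϖ * x)) * Complex.exp ((γ₁ : ℂ) * x) *
        (1 + Complex.exp x) ^ (-((γ₁ : ℂ) + γ₂)) * McC p q υ n (Complex.exp x) =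
      (-1 : ℂ) ^ n * cBeta ((γ₁ : ℂ) - Complex.I * ϖ) ((γ₂ : ℂ) + Complex.I * ϖ) *
        cpoch ((q : ℂ) + 1) (υ * n) *
        ∑ j ∈ Finset.range (n + 1),
          cpoch (-(n : ℂ)) j * cpoch ((n : ℂ) + 1 - (p : ℂ)) (υ * j) *
            cpoch ((γ₁ : ℂ) - Complex.I * ϖ) (υ * j) /
          ((j.factorial : ℂ) * cpoch ((q : ℂ) + 1) (υ * j) *
            cpoch (1 - (γ₂ : ℂ) - Complex.I * ϖ) (υ * j)) := by
  have hmlt : ∀ j ∈ Finset.range (n+1), ((υ*j : ℕ):ℝ) < γ₂ := by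
    intro j hj
    have hjn : j ≤ n := Nat.lt_succ_iff.1 (Finset.mem_range.1 hj)
    have h : (υ*j:ℕ) ≤ (υ*n:ℕ) := Nat.mul_le_mul_left υ hjn
    calc ((υ*j:ℕ):ℝ) ≤ ((υ*n:ℕ):ℝ) := by exact_mod_cast h
      _ < γ₂ := hconv
  rw [show (1 - (γ₂:ℂ) - Complex.I*(ϖ:ℂ)) = 1 - ((γ₂:ℂ) + Complex.I*(ϖ:ℂ)) from by ring]
  set w : ℂ := (γ₁:ℂ) - Complex.I*(ϖ:ℂ) with hw
  set z : ℂ := (γ₂:ℂ) + Complex.I*(ϖ:ℂ) with hz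
  have hwre : w.re = γ₁ := by simp [hw]
  have hzre : z.re = γ₂ := by simp [hz]
  have h2 : ∀ j ∈ Finset.range (n+1),
      0 < (w + ((υ*j:ℕ):ℂ)).re ∧ 0 < (z - ((υ*j:ℕ):ℂ)).re := by
    intro j hj
    constructor
    · simp only [Complex.add_re, hwre, Complex.natCast_re]; positivity
    · simp only [Complex.sub_re, hzre, Complex.natCast_re]; linarith [hmlt j hj]
  have hexp : ∀ j : ℕ, -((γ₁:ℂ) + (γ₂:ℂ)) = -((w + ((υ*j:ℕ):ℂ)) + (z - ((υ*j:ℕ):ℂ))) := by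
    intro j; rw [hw, hz]; ring
  have hrw : ∀ x : ℝ,
      Complex.exp (-(Complex.I * ϖ * x)) * Complex.exp ((γ₁ : ℂ) * x) *
        (1 + Complex.exp (x:ℂ)) ^ (-((γ₁ : ℂ) + (γ₂:ℂ))) * McC p q υ n (Complex.exp (x:ℂ))
      = ∑ j ∈ Finset.range (n+1),
          ((-1:ℂ)^n * cpoch ((q:ℂ)+1) (υ*n) * ((-1:ℂ)^j * (n.choose j : ℂ) *
            (cpoch ((n:ℂ)+1-(p:ℂ)) (υ*j) / cpoch ((q:ℂ)+1) (υ*j))) * (-1:ℂ)^(υ*j)) *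
          (Complex.exp ((w + ((υ*j:ℕ):ℂ)) * x) * (1 + Complex.exp (x:ℂ)) ^ (-((γ₁:ℂ)+(γ₂:ℂ)))) := by
    intro x
    simp only [McC, Finset.mul_sum]
    apply Finset.sum_congr rfl
    intro j hj
    have hpow : (-Complex.exp (x:ℂ))^(υ*j) = (-1:ℂ)^(υ*j) * Complex.exp (((υ*j:ℕ):ℂ) * x) := by
      rw [neg_pow, ← Complex.exp_nat_mul]
    have hexps : Complex.exp ((w + ((υ*j:ℕ):ℂ)) * x)
        = Complex.exp (-(Complex.I*ϖ*x)) * Complex.exp ((γ₁:ℂ)*x) *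
          Complex.exp (((υ*j:ℕ):ℂ)*x) := by
      rw [← Complex.exp_add, ← Complex.exp_add]
      congr 1
      rw [hw]; ring
    rw [hpow, hexps]
    ring
  have hInt : ∀ j ∈ Finset.range (n+1), Integrable (fun x : ℝ =>
      ((-1:ℂ)^n * cpoch ((q:ℂ)+1) (υ*n) * ((-1:ℂ)^j * (n.choose j : ℂ) *
        (cpoch ((n:ℂ)+1-(p:ℂ)) (υ*j) / cpoch ((q:ℂ)+1) (υ*j))) * (-1:ℂ)^(υ*j)) *
      (Complex.exp ((w + ((υ*j:ℕ):ℂ)) * x) * (1 + Complex.exp (x:ℂ)) ^ (-((γ₁:ℂ)+(γ₂:ℂ))))) := by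
    intro j hj
    have h := (key_integrable (w + ((υ*j:ℕ):ℂ)) (z - ((υ*j:ℕ):ℂ))
      (h2 j hj).1 (h2 j hj).2).const_mul
      ((-1:ℂ)^n * cpoch ((q:ℂ)+1) (υ*n) * ((-1:ℂ)^j * (n.choose j : ℂ) *
        (cpoch ((n:ℂ)+1-(p:ℂ)) (υ*j) / cpoch ((q:ℂ)+1) (υ*j))) * (-1:ℂ)^(υ*j))
    rw [hexp j]
    exact h
  simp only [hrw]
  rw [MeasureTheory.integral_finset_sum _ hInt]
  simp only [MeasureTheory.integral_const_mul]
  rw [Finset.mul_sum]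
  apply Finset.sum_congr rfl
  intro j hj
  have hjn : j ≤ n := Nat.lt_succ_iff.1 (Finset.mem_range.1 hj)
  have hIval : (∫ x : ℝ, Complex.exp ((w + ((υ*j:ℕ):ℂ)) * x) *
      (1 + Complex.exp (x:ℂ)) ^ (-((γ₁:ℂ)+(γ₂:ℂ))))
      = Complex.betaIntegral (w + ((υ*j:ℕ):ℂ)) (z - ((υ*j:ℕ):ℂ)) := by
    rw [hexp j]
    exact key_integral _ _
  rw [hIval]
  -- per-term algebra
  have hb := beta_shift ϖ hγ₁ hγ₂ (υ*j) (hmlt j hj)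
  rw [← hw, ← hz] at hb
  have hQ : cpoch ((q:ℂ)+1) (υ*j) ≠ 0 := by
    apply cpoch_ne_zero
    intro i _
    apply re_pos_ne_zero
    simp only [Complex.add_re, Complex.ofReal_re, Complex.one_re, Complex.natCast_re]
    have : (0:ℝ) ≤ i := Nat.cast_nonneg i
    linarith
  have hzm : cpoch (z - ((υ*j:ℕ):ℂ)) (υ*j) ≠ 0 := by
    apply cpoch_ne_zero
    intro i _
    apply re_pos_ne_zero
    simp only [Complex.add_re, Complex.sub_re, hzre, Complex.natCast_re]
    have h0 : (0:ℝ) ≤ i := Nat.cast_nonneg i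
    linarith [hmlt j hj]
  have h1z : cpoch (1 - z) (υ*j) ≠ 0 := by
    rw [cpoch_shift] at hzm
    intro h
    exact hzm (by rw [h, mul_zero])
  have hneg : ((-1:ℂ)^(υ*j)) ≠ 0 := pow_ne_zero _ (by norm_num)
  have hfac : (j.factorial : ℂ) ≠ 0 := by exact_mod_cast j.factorial_ne_zero
  have hchoose := cpoch_neg_nat n j hjn
  have hbeta' : Complex.betaIntegral (w + ((υ*j:ℕ):ℂ)) (z - ((υ*j:ℕ):ℂ))
      = cBeta w z * cpoch w (υ*j) / ((-1:ℂ)^(υ*j) * cpoch (1-z) (υ*j)) := by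
    rw [eq_div_iff (mul_ne_zero hneg h1z)]
    exact hb
  rw [hbeta', hchoose]
  field_simp
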